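/- arXiv:1702.02325 — 3 statements merged into one kernel-verified Lean document; each statement's English description precedes it below -/
import Mathlib

section
/- Take $d \ge 2$ an integer, $0 < \delta < 2^{-d-1}$, and finite sets $X_1, \dots, X_d$ each of cardinality at least $n > 1$. Suppose $Y \subseteq X_1 \times \cdots \times X_d$ has cardinality at least $\delta \cdot |X_1 \times \cdots \times X_d|$. Then for any positive integer $r$ with $r \le \left(\frac{\log n}{5 \log \delta^{-1}}\right)^{1/(d-1)}$, there exist subsets $Z_1 \subseteq X_1, \dots, Z_d \subseteq X_d$, each of cardinality $r$, such that $Z_1 \times \cdots \times Z_d \subseteq Y$. -/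
/-!
Induct on the number of factors, splitting the product as `X 0 × X'`. Count the pairs `(w, b)`
with `w : Fin r → X 0`, `b ∈ X'` and `(w j, b) ∈ Y` for all `j`: by Jensen there are at least
`δ ^ r |X 0| ^ r |X'|` of them, and the non-injective `w` account for at most
`r ^ 2 |X 0| ^ (r - 1) |X'|`. So some `r`-set `W ⊆ X 0` has a common neighbourhood in `X'` of
density `δ' = δ ^ r - r ^ 2 / n`, and we recurse into it. The invariant
`2 r ^ 2 ≤ (δ / 2) ^ (r ^ k) n` (for `k + 1` factors) survives the step since
`δ' / 2 ≥ (δ / 2) ^ r`; with one factor left it says `r ≤ |Y|`. The bound on `r` in the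
theorem implies the invariant for `k = d - 1`.
-/

open Finset

section CommonNeighbours

variable {A B : Type*} [Fintype A] [Fintype B] [DecidableEq A] [DecidableEq B]

theorem sum_card_filter_mem_eq_card (Y : Finset (A × B)) :
    ∑ b, #{a | (a, b) ∈ Y} = #Y := by
  simp only [card_filter]
  rw [sum_comm, ← Fintype.sum_prod_type', ← card_filter, filter_mem_eq_inter, univ_inter]

theorem sum_card_filter_forall_mem_eq_sum_pow (Y : Finset (A × B)) (r : ℕ) :
    ∑ w : Fin r → A, #{b | ∀ j, (w j, b) ∈ Y} = ∑ b, #{a | (a, b) ∈ Y} ^ r := by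
  refine (sum_card_bipartiteAbove_eq_sum_card_bipartiteBelow
    (fun (w : Fin r → A) b => ∀ j, (w j, b) ∈ Y)).trans (sum_congr rfl fun b _ => ?_)
  rw [← Fintype.card_piFinset_const]
  congr 1
  ext w
  simp [bipartiteBelow, Fintype.mem_piFinset]

theorem pow_mul_le_sum_card_filter_pow {Y : Finset (A × B)} {δ : ℝ} (hδ : 0 ≤ δ)
    (hY : δ * (Fintype.card A * Fintype.card B) ≤ #Y) (r : ℕ) :
    δ ^ r * Fintype.card A ^ r * Fintype.card B ≤ ∑ b, (#{a | (a, b) ∈ Y} : ℝ) ^ r := by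
  rcases r with _ | r
  · simp
  rcases (Fintype.card B).eq_zero_or_pos with hB | hB
  · simp [hB, sum_nonneg]
  have hjensen := pow_sum_le_card_mul_sum_pow (s := univ)
    (f := fun b => (#{a | (a, b) ∈ Y} : ℝ)) (fun _ _ => Nat.cast_nonneg _) r
  rw [← Nat.cast_sum, sum_card_filter_mem_eq_card, card_univ] at hjensen
  refine le_of_mul_le_mul_left ?_ (pow_pos (Nat.cast_pos.2 hB) r : (0 : ℝ) < _)
  calc (Fintype.card B : ℝ) ^ r * (δ ^ (r + 1) * Fintype.card A ^ (r + 1) * Fintype.card B)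
      = (δ * (Fintype.card A * Fintype.card B)) ^ (r + 1) := by ring
    _ ≤ (#Y : ℝ) ^ (r + 1) := by gcongr
    _ ≤ _ := hjensen

theorem Nat.pow_le_descFactorial_add (m r : ℕ) :
    m ^ r ≤ m.descFactorial r + r ^ 2 * m ^ (r - 1) := by
  induction r with
  | zero => simp
  | succ r ih =>
    have hD : m.descFactorial r ≤ m ^ r := Nat.descFactorial_le_pow m r
    have hm : r ^ 2 * m ^ (r - 1) * m ≤ r ^ 2 * m ^ r := by
      rcases r with _ | r
      · simp
      · rw [Nat.add_sub_cancel, mul_assoc, ← pow_succ]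
    calc m ^ (r + 1) = m ^ r * m := pow_succ m r
      _ ≤ (m.descFactorial r + r ^ 2 * m ^ (r - 1)) * m := Nat.mul_le_mul_right m ih
      _ ≤ m.descFactorial r * (m - r) + r * m ^ r + r ^ 2 * m ^ r := by
        rw [add_mul]
        gcongr
        calc m.descFactorial r * m ≤ m.descFactorial r * (m - r + r) := by gcongr; omega
          _ ≤ _ := by rw [mul_add, mul_comm _ r]; gcongr
      _ ≤ m.descFactorial (r + 1) + (r + 1) ^ 2 * m ^ (r + 1 - 1) := by
        rw [Nat.descFactorial_succ, Nat.add_sub_cancel, mul_comm (m - r)]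
        nlinarith

omit [Fintype B] [DecidableEq B] in
theorem card_filter_not_injective_le (r : ℕ) :
    #{w : Fin r → A | ¬ Function.Injective w} ≤ r ^ 2 * Fintype.card A ^ (r - 1) := by
  have hinj : #{w : Fin r → A | Function.Injective w} = (Fintype.card A).descFactorial r := by
    rw [← Fintype.card_subtype, Fintype.card_congr (Equiv.subtypeInjectiveEquivEmbedding _ _),
      Fintype.card_embedding_eq, Fintype.card_fin]
  have hsplit := card_filter_add_card_filter_not (s := (univ : Finset (Fin r → A)))
    (fun w => Function.Injective w)
  rw [card_univ, Fintype.card_fun, Fintype.card_fin, hinj] at hsplit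
  have := Nat.pow_le_descFactorial_add (Fintype.card A) r
  omega

theorem exists_card_eq_and_le_card_filter_forall_mem (Y : Finset (A × B)) {r : ℕ}
    (hrA : r ≤ Fintype.card A) {δ : ℝ} (hδ : 0 ≤ δ)
    (hδr : r ^ 2 / Fintype.card A ≤ δ ^ r)
    (hY : δ * (Fintype.card A * Fintype.card B) ≤ #Y) :
    ∃ W : Finset A, #W = r ∧
      (δ ^ r - r ^ 2 / Fintype.card A) * Fintype.card B ≤ #{b | ∀ a ∈ W, (a, b) ∈ Y} := by
  set m := Fintype.card A
  set M := Fintype.card B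
  set S : (Fin r → A) → ℝ := fun w => #{b | ∀ j, (w j, b) ∈ Y}
  set Inj : Finset (Fin r → A) := {w | Function.Injective w}
  have htotal : δ ^ r * m ^ r * M ≤ ∑ w, S w := by
    simp only [S]
    rw [← Nat.cast_sum, sum_card_filter_forall_mem_eq_sum_pow, Nat.cast_sum]
    exact_mod_cast pow_mul_le_sum_card_filter_pow hδ hY r
  have hpow : (r ^ 2 * m ^ (r - 1) : ℝ) ≤ r ^ 2 / m * m ^ r := by
    rcases r with _ | r
    · simp
    · have hm : (0 : ℝ) < m := by exact_mod_cast (Nat.succ_pos r).trans_le hrA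
      rw [Nat.add_sub_cancel, pow_succ (m : ℝ)]
      exact le_of_eq (by field_simp)
  have hbad : ∑ w ∈ univ.filter (¬ Function.Injective ·), S w ≤ r ^ 2 / m * m ^ r * M := by
    refine (sum_le_card_nsmul _ _ (M : ℝ) fun w _ => ?_).trans ?_
    · exact Nat.cast_le.2 (card_le_univ _)
    · rw [nsmul_eq_mul]
      gcongr
      exact le_trans (by exact_mod_cast card_filter_not_injective_le r) hpow
  have hgood : (δ ^ r - r ^ 2 / m) * m ^ r * M ≤ ∑ w ∈ Inj, S w := by
    rw [← sum_filter_add_sum_filter_not univ (Function.Injective ·)] at htotal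
    linarith
  have hInj : Inj.Nonempty := by
    obtain ⟨w⟩ := Function.Embedding.nonempty_of_card_le
      (by simpa using hrA : Fintype.card (Fin r) ≤ m)
    exact ⟨w, by simpa [Inj] using w.injective⟩
  obtain ⟨w, hw, hSw⟩ :=
    exists_le_of_sum_le (f := fun _ => (δ ^ r - r ^ 2 / m) * M) (g := S) hInj <| by
      rw [sum_const, nsmul_eq_mul]
      refine le_trans ?_ hgood
      have hcard : (#Inj : ℝ) ≤ m ^ r := by
        exact_mod_cast (card_le_univ Inj).trans_eq (by simp [m])
      calc (#Inj : ℝ) * ((δ ^ r - r ^ 2 / m) * M) ≤ m ^ r * ((δ ^ r - r ^ 2 / m) * M) :=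
            mul_le_mul_of_nonneg_right hcard (mul_nonneg (sub_nonneg.2 hδr) M.cast_nonneg)
        _ = _ := by ring
  refine ⟨univ.image w, ?_, ?_⟩
  · rw [card_image_of_injective _ (mem_filter.1 hw).2, card_univ, Fintype.card_fin]
  · refine hSw.trans_eq ?_
    simp [S]

end CommonNeighbours

theorem exists_card_eq_and_le_card_filter_cons_mem {k : ℕ} {X : Fin (k + 1) → Type*}
    [∀ i, Fintype (X i)] [∀ i, DecidableEq (X i)] (Y : Finset (∀ i, X i)) {r : ℕ}
    (hrA : r ≤ Fintype.card (X 0)) {δ : ℝ} (hδ : 0 ≤ δ)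
    (hδr : r ^ 2 / Fintype.card (X 0) ≤ δ ^ r)
    (hY : δ * Fintype.card (∀ i, X i) ≤ #Y) :
    ∃ W : Finset (X 0), #W = r ∧
      (δ ^ r - r ^ 2 / Fintype.card (X 0)) * Fintype.card (∀ i, X (Fin.succ i)) ≤
        #{g | ∀ a ∈ W, Fin.cons a g ∈ Y} := by
  have hcard : Fintype.card (∀ i, X i) =
      Fintype.card (X 0) * Fintype.card (∀ i, X (Fin.succ i)) := by
    rw [← Fintype.card_prod, Fintype.card_congr (Fin.consEquiv X)]
  obtain ⟨W, hW, hWY⟩ := exists_card_eq_and_le_card_filter_forall_mem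
    (Y.map (Fin.consEquiv X).symm.toEmbedding) hrA hδ hδr (by simpa [hcard] using hY)
  exact ⟨W, hW, by simpa [Fin.consEquiv] using hWY⟩

theorem exists_piFinset_subset_of_le_card {ι : Type*} [Fintype ι] [DecidableEq ι] [Unique ι]
    {X : ι → Type*} (Y : Finset (∀ i, X i)) {r : ℕ} (hr : r ≤ #Y) :
    ∃ Z : ∀ i, Finset (X i), (∀ i, #(Z i) = r) ∧ Fintype.piFinset Z ⊆ Y := by
  classical
  obtain ⟨T, hTY, hT⟩ := exists_subset_card_eq hr
  have heval (i : ι) : Function.Injective fun f : ∀ i, X i => f i :=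
    fun f g h => funext fun j => Subsingleton.elim i j ▸ h
  refine ⟨fun i => T.image (· i), fun i => by rw [card_image_of_injective _ (heval i), hT],
    fun f hf => ?_⟩
  obtain ⟨g, hgT, hgf⟩ := mem_image.1 (Fintype.mem_piFinset.1 hf default)
  exact heval default hgf ▸ hTY hgT

theorem half_pow_le_half_sub {r k n : ℕ} {δ : ℝ} (hr : 2 ≤ r) (hδ0 : 0 ≤ δ) (hδ1 : δ ≤ 1)
    (h : 2 * r ^ 2 ≤ (δ / 2) ^ (r ^ (k + 1)) * n) :
    (δ / 2) ^ r ≤ (δ ^ r - r ^ 2 / n) / 2 := by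
  have hn : (0 : ℝ) < n := by
    rcases Nat.eq_zero_or_pos n with rfl | hn
    · have hr' : (2 : ℝ) ≤ r := by exact_mod_cast hr
      norm_num at h
      nlinarith
    · exact_mod_cast hn
  have hsmall : (r : ℝ) ^ 2 / n ≤ (δ / 2) ^ r / 2 := by
    rw [div_le_div_iff₀ hn two_pos]
    have : (δ / 2) ^ (r ^ (k + 1)) ≤ (δ / 2) ^ r :=
      pow_le_pow_of_le_one (by positivity) (by linarith) (Nat.le_self_pow (by omega) r)
    nlinarith
  have hlarge : 4 * (δ / 2) ^ r ≤ δ ^ r := by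
    have : (4 : ℝ) ≤ 2 ^ r := by
      calc (4 : ℝ) = 2 ^ 2 := by norm_num
        _ ≤ 2 ^ r := pow_le_pow_right₀ one_le_two hr
    calc 4 * (δ / 2) ^ r ≤ 2 ^ r * (δ / 2) ^ r := by gcongr
      _ = δ ^ r := by rw [← mul_pow, mul_div_cancel₀ δ two_ne_zero]
  linarith [pow_nonneg (div_nonneg hδ0 zero_le_two) r]

theorem exists_piFinset_subset_of_two_mul_sq_le {r : ℕ} (hr : 2 ≤ r) (n : ℕ) :
    ∀ (k : ℕ) {X : Fin (k + 1) → Type*} [∀ i, Fintype (X i)] (Y : Finset (∀ i, X i))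
      {δ : ℝ}, 0 ≤ δ → δ ≤ 1 → (∀ i, n ≤ Fintype.card (X i)) →
      δ * Fintype.card (∀ i, X i) ≤ #Y →
      2 * r ^ 2 ≤ (δ / 2) ^ (r ^ k) * n →
      ∃ Z : ∀ i, Finset (X i), (∀ i, #(Z i) = r) ∧ Fintype.piFinset Z ⊆ Y
  | 0, X, _, Y, δ, hδ0, _, hX, hY, h => by
    have : Unique (Fin (0 + 1)) := inferInstanceAs (Unique (Fin 1))
    refine exists_piFinset_subset_of_le_card Y ?_
    have hcard : (n : ℝ) ≤ Fintype.card (∀ i, X i) := by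
      rw [Fintype.card_pi, Fin.prod_univ_one]
      exact_mod_cast hX 0
    have hr' : (1 : ℝ) ≤ r := by exact_mod_cast (by omega : 1 ≤ r)
    have : (r : ℝ) ≤ #Y :=
      calc (r : ℝ) ≤ 2 * r ^ 2 := by nlinarith
        _ ≤ δ / 2 * n := by simpa using h
        _ ≤ δ * Fintype.card (∀ i, X i) := by gcongr; linarith
        _ ≤ #Y := hY
    exact_mod_cast this
  | k + 1, X, _, Y, δ, hδ0, hδ1, hX, hY, h => by
    classical
    have hstep := half_pow_le_half_sub hr hδ0 hδ1 h
    set δ' := δ ^ r - r ^ 2 / n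
    have hδ'0 : 0 ≤ δ' := by nlinarith [pow_nonneg (div_nonneg hδ0 zero_le_two) r]
    have hδ'1 : δ' ≤ 1 := by
      have : (0 : ℝ) ≤ r ^ 2 / n := by positivity
      linarith [pow_le_one₀ hδ0 hδ1 (n := r)]
    have hrn : r ≤ n := by
      have hr' : (1 : ℝ) ≤ r := by exact_mod_cast (by omega : 1 ≤ r)
      have : (δ / 2) ^ r ^ (k + 1) ≤ 1 := pow_le_one₀ (by positivity) (by linarith)
      have : (r : ℝ) ≤ n := by nlinarith
      exact_mod_cast this
    have hn : (0 : ℝ) < n := by exact_mod_cast (by omega : 0 < n)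
    have hnA : (n : ℝ) ≤ Fintype.card (X 0) := by exact_mod_cast hX 0
    have hdiv : (r : ℝ) ^ 2 / Fintype.card (X 0) ≤ r ^ 2 / n :=
      div_le_div_of_nonneg_left (by positivity) hn hnA
    obtain ⟨W, hW, hWY⟩ := exists_card_eq_and_le_card_filter_cons_mem Y (hrn.trans (hX 0)) hδ0
      (by linarith) hY
    have hinv : 2 * r ^ 2 ≤ (δ' / 2) ^ (r ^ k) * n :=
      calc 2 * (r : ℝ) ^ 2 ≤ (δ / 2) ^ (r ^ (k + 1)) * n := h
        _ = ((δ / 2) ^ r) ^ (r ^ k) * n := by rw [← pow_mul, pow_succ']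
        _ ≤ (δ' / 2) ^ (r ^ k) * n := by gcongr
    obtain ⟨Z, hZ, hZY⟩ := exists_piFinset_subset_of_two_mul_sq_le hr n k
      {g | ∀ a ∈ W, Fin.cons a g ∈ Y} hδ'0 hδ'1 (fun i => hX i.succ)
      (le_trans (by gcongr; linarith) hWY) hinv
    refine ⟨Fin.cons W Z, Fin.cases (by simpa using hW) (by simpa using hZ), fun f hf => ?_⟩
    rw [Fin.mem_piFinset_iff_zero_tail] at hf
    simp only [Fin.cons_zero, Fin.tail_cons] at hf
    simpa using (mem_filter.1 (hZY hf.2)).2 _ hf.1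

theorem two_le_log_inv {δ : ℝ} (hδ0 : 0 < δ) (hδ : δ ≤ 1 / 8) :
    2 ≤ Real.log δ⁻¹ := by
  have h8 : Real.log 8 ≤ Real.log δ⁻¹ :=
    Real.log_le_log (by norm_num) (by rw [le_inv_comm₀ (by norm_num) hδ0]; simpa using hδ)
  have : Real.log 8 = 3 * Real.log 2 := by
    rw [← Real.log_rpow two_pos]; norm_num
  linarith [Real.log_two_gt_d9]

theorem two_mul_sq_le_half_pow_mul {r R : ℕ} {δ x : ℝ} (hr : 1 ≤ r) (hrR : r ≤ R)
    (hδ : 0 < δ) (hL : 2 ≤ Real.log δ⁻¹) (hx : 0 < x)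
    (h : R * (5 * Real.log δ⁻¹) ≤ Real.log x) :
    2 * r ^ 2 ≤ (δ / 2) ^ R * x := by
  have hr' : (1 : ℝ) ≤ r := by exact_mod_cast hr
  have hrR' : (r : ℝ) ≤ R := by exact_mod_cast hrR
  rw [← Real.log_le_log_iff (by positivity) (by positivity), Real.log_mul (by norm_num)
    (by positivity), Real.log_mul (by positivity) hx.ne', Real.log_pow, Real.log_pow,
    Real.log_div hδ.ne' two_ne_zero, ← neg_neg (Real.log δ), ← Real.log_inv]
  have hlog_r : Real.log r ≤ r - 1 := Real.log_le_sub_one_of_pos (by positivity)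
  nlinarith [Real.log_two_lt_d9, Real.log_two_gt_d9]

theorem stmt3 {d n r : ℕ} (hd : 2 ≤ d) {δ : ℝ} (hδ0 : 0 < δ) (hδ1 : δ < 2 ^ (-(d : ℝ) - 1))
    (hn : 1 < n) (X : Fin d → Type*) [∀ i, Fintype (X i)] (hX : ∀ i, n ≤ Fintype.card (X i))
    (Y : Finset (∀ i, X i))
    (hY : δ * Fintype.card (∀ i, X i) ≤ Y.card)
    (hr : 0 < r) (hrle : (r : ℝ) ≤ (Real.log n / (5 * Real.log δ⁻¹)) ^ ((1 : ℝ) / ((d : ℝ) - 1))) :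
    ∃ Z : ∀ i, Finset (X i), (∀ i, (Z i).card = r) ∧
      ∀ f : ∀ i, X i, (∀ i, f i ∈ Z i) → f ∈ Y := by
  classical
  obtain ⟨k, rfl⟩ : ∃ k, d = k + 1 := ⟨d - 1, by omega⟩
  have hk : (1 : ℝ) ≤ k := by exact_mod_cast (by omega : 1 ≤ k)
  have hδ8 : δ ≤ 1 / 8 := by
    refine hδ1.le.trans ?_
    calc (2 : ℝ) ^ (-((k + 1 : ℕ) : ℝ) - 1) ≤ 2 ^ (-3 : ℝ) :=
          Real.rpow_le_rpow_of_exponent_le one_le_two (by push_cast; linarith [hk])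
      _ = 1 / 8 := by norm_num
  have hL := two_le_log_inv hδ0 hδ8
  rcases (Nat.succ_le_of_lt hr).eq_or_lt with rfl | hr2
  · obtain ⟨f, hf⟩ : Y.Nonempty := by
      rw [← card_pos, ← Nat.cast_pos (α := ℝ)]
      have (i : Fin (k + 1)) : Nonempty (X i) :=
        Fintype.card_pos_iff.1 (by have := hX i; omega)
      exact lt_of_lt_of_le (mul_pos hδ0 (Nat.cast_pos.2 Fintype.card_pos)) hY
    exact ⟨fun i => {f i}, fun i => card_singleton _,
      fun g hg => (funext fun i => mem_singleton.1 (hg i)) ▸ hf⟩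
  · have hlog : ((r ^ k : ℕ) : ℝ) * (5 * Real.log δ⁻¹) ≤ Real.log n := by
      push_cast at hrle
      rw [add_sub_cancel_right, one_div, Real.le_rpow_inv_iff_of_pos (by positivity)
        (div_nonneg (Real.log_nonneg (by exact_mod_cast hn.le)) (by linarith)) (by linarith),
        Real.rpow_natCast, le_div_iff₀ (by positivity)] at hrle
      exact_mod_cast hrle
    obtain ⟨Z, hZ, hZY⟩ := exists_piFinset_subset_of_two_mul_sq_le hr2 n k Y hδ0.le
      (by linarith) hX hY
      (two_mul_sq_le_half_pow_mul hr (Nat.le_self_pow (by omega) r) hδ0 hL (by positivity) hlog)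
    exact ⟨Z, hZ, fun f hf => hZY (Fintype.mem_piFinset.2 hf)⟩
end

section
/- For positive integers $n, r, d$ with $n \ge r \ge 2$ and real $\delta > 0$ satisfying $(2^{-d-1}\delta)^{2r^{d-1}} \cdot n r^{-1} \ge 1$, define $N_d(n, r, \delta)$ to be the minimum over all subsets $Y \subseteq X_1 \times \cdots \times X_d$ (with each $|X_i| = n$) of cardinality at least $\delta n^d$ of the number of choices of subsets $Z_1, \dots, Z_d$ each of cardinality $r$ with $Z_1 \times \cdots \times Z_d \subseteq Y$. Then $N_d(n, r, \delta) \ge (2^{-d-1}\delta)^{\frac{r^{d+1} - r}{r-1}} \cdot \frac{n^{rd}}{(r!)^d}$. -/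
/-!
A grid `Z₀ × Z'` lies in `Y` iff `Z'` lies in the link of `Z₀`, the set of `g` with
`Z₀ × {g} ⊆ Y`, so the grids in `Y` are counted by summing, over the `r`-sets `W`, the grids in
the link of `W`. Double counting gives `∑_W |link W| = ∑_g (|column g| choose r)`, which by
convexity is at least `(δ/2)^r n^(r+d) / r!` as long as `r ≤ δn/2`. Hence many links have density
at least `2^d c^r`, where `c = 2^(-d-1) δ`, and induction on the dimension applies to them with
`c^r` in place of `c`. Iterating `c ↦ c^r` produces the exponent `r + r² + ⋯ + r^d`, and the
hypothesis on `n` is what keeps `r ≤ c n` along the way.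
-/

open Finset
open scoped Nat

theorem pow_div_le_sum_choose {ι : Type*} (s : Finset ι) (m : ι → ℕ) {r : ℕ} (hr : 0 < r)
    {x : ℝ} (hx : 0 ≤ x) (hxm : x ≤ ∑ i ∈ s, ((m i : ℝ) - r)) :
    x ^ r / (#s ^ (r - 1) * r !) ≤ ∑ i ∈ s, ((m i).choose r : ℝ) := by
  obtain ⟨k, rfl⟩ : ∃ k, r = k + 1 := ⟨r - 1, by omega⟩
  set h : ι → ℝ := fun i => ((m i + 1 - (k + 1) : ℕ) : ℝ)
  have hmh : ∀ i, (m i : ℝ) - (k + 1 : ℕ) ≤ h i := fun i => by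
    have : ((m i : ℤ) - (k + 1 : ℕ) : ℤ) ≤ ((m i + 1 - (k + 1) : ℕ) : ℤ) := by omega
    simpa [h] using (Int.cast_le (R := ℝ)).2 this
  calc x ^ (k + 1) / (#s ^ (k + 1 - 1) * (k + 1)!)
      ≤ (∑ i ∈ s, h i) ^ (k + 1) / #s ^ k / (k + 1)! := by
        rw [div_div, Nat.add_sub_cancel]
        gcongr
        exact hxm.trans (sum_le_sum fun i _ => hmh i)
    _ ≤ (∑ i ∈ s, h i ^ (k + 1)) / (k + 1)! := by
        gcongr
        exact pow_sum_div_card_le_sum_pow (fun i _ => Nat.cast_nonneg _) k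
    _ ≤ ∑ i ∈ s, ((m i).choose (k + 1) : ℝ) := by
        rw [sum_div]
        exact sum_le_sum fun i _ => by simpa [h] using Nat.pow_le_choose (α := ℝ) (k + 1) (m i)

theorem sum_le_card_filter_mul_add {ι : Type*} (s : Finset ι) (a : ι → ℝ) {t U : ℝ}
    (ht : 0 ≤ t) (hU : ∀ i ∈ s, a i ≤ U) :
    ∑ i ∈ s, a i ≤ #{i ∈ s | t ≤ a i} * U + #s * t := by
  rw [← sum_filter_add_sum_filter_not s (fun i => t ≤ a i)]
  gcongr
  · simpa using sum_le_card_nsmul _ _ U fun i hi => hU i (mem_filter.1 hi).1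
  · calc ∑ i ∈ s with ¬t ≤ a i, a i ≤ #{i ∈ s | ¬t ≤ a i} * t := by
          simpa using sum_le_card_nsmul _ _ t fun i hi => (not_le.1 (mem_filter.1 hi).2).le
      _ ≤ #s * t := by gcongr; exact filter_subset _ _

variable {α : Type*} [Fintype α] {r d : ℕ}

theorem le_one_of_mul_pow_le_card {Y : Finset (Fin d → α)} {δ : ℝ} (hα : 0 < Fintype.card α)
    (hY : δ * Fintype.card α ^ d ≤ #Y) : δ ≤ 1 := by
  have hYle : (#Y : ℝ) ≤ Fintype.card α ^ d := by
    exact_mod_cast (card_le_univ Y).trans_eq (by simp)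
  exact le_of_mul_le_mul_right (by linarith) (by positivity)

variable [DecidableEq α]

def subgrids (r : ℕ) (Y : Finset (Fin d → α)) : Finset (Fin d → Finset α) :=
  {Z | (∀ i, #(Z i) = r) ∧ ∀ f : Fin d → α, (∀ i, f i ∈ Z i) → f ∈ Y}

def column (Y : Finset (Fin (d + 1) → α)) (g : Fin d → α) : Finset α :=
  {x | Fin.cons x g ∈ Y}

def link (Y : Finset (Fin (d + 1) → α)) (W : Finset α) : Finset (Fin d → α) :=
  {g | W ⊆ column Y g}

theorem mem_subgrids_succ {Y : Finset (Fin (d + 1) → α)} {Z : Fin (d + 1) → Finset α} :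
    Z ∈ subgrids r Y ↔ #(Z 0) = r ∧ Fin.tail Z ∈ subgrids r (link Y (Z 0)) := by
  simp only [subgrids, link, column, mem_filter, mem_univ, true_and, Fin.forall_fin_succ,
    Fin.forall_fin_succ_pi, Fin.cons_zero, Fin.cons_succ, Fin.tail, subset_iff]
  tauto

theorem card_subgrids_succ (Y : Finset (Fin (d + 1) → α)) :
    #(subgrids r Y) = ∑ W ∈ powersetCard r univ, #(subgrids r (link Y W)) := by
  rw [← card_sigma]
  refine card_nbij' (fun Z => ⟨Z 0, Fin.tail Z⟩) (fun p => Fin.cons p.1 p.2) ?_ ?_ ?_ ?_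
  · intro Z hZ
    simp_all [mem_subgrids_succ]
  · rintro ⟨W, T⟩ h
    simp_all [mem_subgrids_succ]
  · intro Z _
    simp
  · rintro ⟨W, T⟩ _
    simp

theorem one_le_card_subgrids_zero {Y : Finset (Fin 0 → α)} (hY : Y.Nonempty) :
    1 ≤ #(subgrids r Y) := by
  obtain ⟨f, hf⟩ := hY
  refine card_pos.2 ⟨default, ?_⟩
  simp only [subgrids, mem_filter, mem_univ, true_and]
  exact ⟨finZeroElim, fun g _ => Subsingleton.elim f g ▸ hf⟩

theorem sum_card_link (Y : Finset (Fin (d + 1) → α)) :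
    ∑ W ∈ powersetCard r univ, #(link Y W) = ∑ g, (#(column Y g)).choose r := by
  refine (sum_card_bipartiteAbove_eq_sum_card_bipartiteBelow (fun W g => W ⊆ column Y g)).trans
    (sum_congr rfl fun g _ => ?_)
  rw [← card_powersetCard]
  congr 1
  ext W
  simp [bipartiteBelow, mem_powersetCard, and_comm]

theorem sum_card_column (Y : Finset (Fin (d + 1) → α)) :
    ∑ g, #(column Y g) = #Y := by
  simp only [column, card_filter]
  rw [← Fintype.sum_prod_type_right' (fun x g => if Fin.cons x g ∈ Y then 1 else 0)]
  exact ((Fin.consEquiv fun _ => α).sum_comp (fun f => if f ∈ Y then 1 else 0)).trans (by simp)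

theorem le_sum_card_link {Y : Finset (Fin (d + 1) → α)} {δ : ℝ} (hr : 0 < r) (hδ : 0 ≤ δ)
    (hrδ : r ≤ δ * Fintype.card α / 2) (hY : δ * Fintype.card α ^ (d + 1) ≤ #Y) :
    (δ / 2) ^ r * (Fintype.card α ^ r / r !) * Fintype.card α ^ d ≤
      ∑ W ∈ powersetCard r univ, (#(link Y W) : ℝ) := by
  have hn : (0 : ℝ) < Fintype.card α := (Nat.cast_nonneg _).lt_of_ne fun h => by
    rw [← h, mul_zero, zero_div, Nat.cast_nonpos] at hrδ; omega
  set n : ℝ := (Fintype.card α : ℝ) with hn_def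
  rw [← Nat.cast_sum, sum_card_link, Nat.cast_sum]
  have hsum : δ / 2 * n ^ (d + 1) ≤ ∑ g, ((#(column Y g) : ℝ) - r) := by
    rw [sum_sub_distrib, ← Nat.cast_sum, sum_card_column]
    simp only [sum_const, card_univ, Fintype.card_fun, Fintype.card_fin, nsmul_eq_mul]
    rw [pow_succ] at hY
    rw [Nat.cast_pow, ← hn_def, pow_succ]
    nlinarith [mul_le_mul_of_nonneg_left hrδ (pow_pos hn d).le]
  have := pow_div_le_sum_choose univ (fun g => #(column Y g)) hr (by positivity) hsum
  obtain ⟨k, rfl⟩ : ∃ k, r = k + 1 := ⟨r - 1, by omega⟩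
  simp only [card_univ, Fintype.card_fun, Fintype.card_fin, Nat.cast_pow, Nat.add_sub_cancel,
    ← hn_def] at this
  convert this using 1
  field_simp
  ring

theorem mul_le_card_subgrids_succ {Y : Finset (Fin (d + 1) → α)} {δ δ' M : ℝ} (hr : 0 < r)
    (hδ : 0 ≤ δ) (hδ' : 0 ≤ δ') (hM : 0 ≤ M) (hrδ : r ≤ δ * Fintype.card α / 2)
    (hY : δ * Fintype.card α ^ (d + 1) ≤ #Y)
    (hlink : ∀ W, δ' * Fintype.card α ^ d ≤ #(link Y W) → M ≤ #(subgrids r (link Y W))) :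
    ((δ / 2) ^ r - δ') * (Fintype.card α ^ r / r !) * M ≤ #(subgrids r Y) := by
  have hn : (0 : ℝ) < Fintype.card α := (Nat.cast_nonneg _).lt_of_ne fun h => by
    rw [← h, mul_zero, zero_div, Nat.cast_nonpos] at hrδ; omega
  set n : ℝ := (Fintype.card α : ℝ)
  set P := powersetCard r (univ : Finset α)
  set G := {W ∈ P | δ' * n ^ d ≤ #(link Y W)}
  have hP : (#P : ℝ) ≤ n ^ r / r ! := by
    simpa [P] using Nat.choose_le_pow_div (α := ℝ) r (Fintype.card α)
  have hlink_le : ∀ W ∈ P, (#(link Y W) : ℝ) ≤ n ^ d := fun W _ => by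
    simpa [n] using (Nat.cast_le (α := ℝ)).2 (card_le_univ (link Y W))
  have hG : ((δ / 2) ^ r - δ') * (n ^ r / r !) ≤ #G := by
    have hlinks := le_sum_card_link hr hδ hrδ hY
    have havg := sum_le_card_filter_mul_add P _ (by positivity) hlink_le (t := δ' * n ^ d)
    refine le_of_mul_le_mul_right ?_ (pow_pos hn d)
    nlinarith [mul_le_mul_of_nonneg_right hP (by positivity : 0 ≤ δ' * n ^ d)]
  calc ((δ / 2) ^ r - δ') * (n ^ r / r !) * M ≤ #G * M := by gcongr
    _ = ∑ W ∈ G, M := by rw [sum_const, nsmul_eq_mul]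
    _ ≤ ∑ W ∈ G, (#(subgrids r (link Y W)) : ℝ) :=
        sum_le_sum fun W hW => hlink W (mem_filter.1 hW).2
    _ ≤ ∑ W ∈ P, (#(subgrids r (link Y W)) : ℝ) :=
        sum_le_sum_of_subset_of_nonneg (filter_subset _ _) fun _ _ _ => by positivity
    _ = #(subgrids r Y) := by rw [card_subgrids_succ, Nat.cast_sum]

theorem pow_mul_le_card_subgrids_succ {Y : Finset (Fin (d + 1) → α)} {c : ℝ} (hr : 2 ≤ r)
    (hc : 0 < c) (hrc : r ≤ c * Fintype.card α)
    (hY : 2 ^ (d + 2) * c * Fintype.card α ^ (d + 1) ≤ #Y)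
    (hlink : ∀ Y' : Finset (Fin d → α), 2 ^ (d + 1) * c ^ r * Fintype.card α ^ d ≤ #Y' →
      (c ^ r) ^ (r * ∑ i ∈ range d, r ^ i) * Fintype.card α ^ (r * d) / (r ! : ℝ) ^ d ≤
        #(subgrids r Y')) :
    c ^ (r * ∑ i ∈ range (d + 1), r ^ i) * Fintype.card α ^ (r * (d + 1)) / (r ! : ℝ) ^ (d + 1)
      ≤ #(subgrids r Y) := by
  set n : ℝ := (Fintype.card α : ℝ)
  set A : ℝ := 2 ^ (d + 1)
  have hA : 2 ≤ A := le_self_pow₀ one_le_two (by omega)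
  have hgap : c ^ r ≤ (A * c) ^ r - A * c ^ r := by
    have : A + 1 ≤ A ^ r := by nlinarith [pow_le_pow_right₀ (by linarith : 1 ≤ A) hr]
    rw [mul_pow]
    nlinarith [mul_le_mul_of_nonneg_right this (pow_pos hc r).le]
  have hA2 : 2 * A = 2 ^ (d + 2) := (pow_succ' 2 (d + 1)).symm
  have hstep := mul_le_card_subgrids_succ (δ := 2 * (A * c)) (δ' := A * c ^ r) (by omega)
    (by positivity) (by positivity) (by positivity) (by nlinarith) (by rwa [← mul_assoc, hA2])
    fun W hW => hlink _ hW
  calc c ^ (r * ∑ i ∈ range (d + 1), r ^ i) * n ^ (r * (d + 1)) / (r ! : ℝ) ^ (d + 1)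
      = c ^ r * (n ^ r / r !) *
          ((c ^ r) ^ (r * ∑ i ∈ range d, r ^ i) * n ^ (r * d) / (r ! : ℝ) ^ d) := by
        rw [geom_sum_succ, mul_add, mul_one, pow_add, ← pow_mul]
        ring
    _ ≤ ((2 * (A * c) / 2) ^ r - A * c ^ r) * (n ^ r / r !) *
          ((c ^ r) ^ (r * ∑ i ∈ range d, r ^ i) * n ^ (r * d) / (r ! : ℝ) ^ d) := by
        rw [mul_div_cancel_left₀ _ two_ne_zero]
        gcongr
    _ ≤ #(subgrids r Y) := hstep

theorem le_card_subgrids {d : ℕ} (hr : 2 ≤ r) {c : ℝ} (hc : 0 < c) (hc1 : c ≤ 1)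
    (hcond : (r : ℝ) ≤ c ^ (2 * r ^ d) * Fintype.card α) (Y : Finset (Fin (d + 1) → α))
    (hY : 2 ^ (d + 2) * c * Fintype.card α ^ (d + 1) ≤ #Y) :
    c ^ (r * ∑ i ∈ range (d + 1), r ^ i) * Fintype.card α ^ (r * (d + 1)) / (r ! : ℝ) ^ (d + 1)
      ≤ #(subgrids r Y) := by
  have hrc : (r : ℝ) ≤ c * Fintype.card α :=
    hcond.trans (by gcongr; exact pow_le_of_le_one hc.le hc1 (by positivity))
  refine pow_mul_le_card_subgrids_succ hr hc hrc hY fun Y' hY' => ?_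
  cases d with
  | zero =>
    have hY'pos : (0 : ℝ) < #Y' := lt_of_lt_of_le (by positivity) hY'
    simpa using one_le_card_subgrids_zero (r := r) (card_pos.1 (by exact_mod_cast hY'pos))
  | succ d =>
    refine le_card_subgrids hr (pow_pos hc r) (pow_le_one₀ hc.le hc1) ?_ Y' hY'
    rwa [← pow_mul, mul_left_comm, ← pow_succ']

theorem stmt4 (n r d : ℕ) (hr : 2 ≤ r) (hrn : r ≤ n) (hd : 0 < d) (δ : ℝ) (hδ : 0 < δ)
    (hcond : 1 ≤ ((2 : ℝ) ^ (-(d : ℝ) - 1) * δ) ^ (2 * r ^ (d - 1)) * n / r)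
    (Y : Finset (Fin d → Fin n)) (hY : δ * (n : ℝ) ^ d ≤ Y.card) :
    ((2 : ℝ) ^ (-(d : ℝ) - 1) * δ) ^ (((r : ℝ) ^ (d + 1) - r) / ((r : ℝ) - 1)) *
        (n : ℝ) ^ (r * d) / (r.factorial : ℝ) ^ d ≤
      (Nat.card {Z : Fin d → Finset (Fin n) //
          (∀ i, (Z i).card = r) ∧ ∀ f : Fin d → Fin n, (∀ i, f i ∈ Z i) → f ∈ Y} : ℝ) := by
  obtain ⟨d, rfl⟩ : ∃ d', d = d' + 1 := ⟨d - 1, by omega⟩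
  have hpow : (2 : ℝ) ^ (-((d + 1 : ℕ) : ℝ) - 1) = ((2 : ℝ) ^ (d + 2))⁻¹ := by
    rw [← Real.rpow_natCast, ← Real.rpow_neg zero_le_two]
    push_cast
    ring_nf
  have hexp : ((r : ℝ) ^ (d + 1 + 1) - r) / ((r : ℝ) - 1) =
      (r * ∑ i ∈ range (d + 1), r ^ i : ℕ) := by
    push_cast
    rw [geom_sum_eq (by exact_mod_cast (by omega : r ≠ 1))]
    ring
  rw [hpow, hexp, Real.rpow_natCast, Nat.card_eq_fintype_card, Fintype.card_subtype]
  rw [hpow, Nat.add_sub_cancel, le_div_iff₀ (by positivity), one_mul] at hcond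
  set c := ((2 : ℝ) ^ (d + 2))⁻¹ * δ
  have hδc : δ = 2 ^ (d + 2) * c := by simp [c]
  have hc1 : c ≤ 1 := by
    have hδ1 : δ ≤ 1 := le_one_of_mul_pow_le_card (Y := Y) (by rw [Fintype.card_fin]; omega) (by simpa using hY)
    nlinarith [one_le_pow₀ (M₀ := ℝ) one_le_two (n := d + 2), (by positivity : 0 < c)]
  refine (le_card_subgrids hr (by positivity) hc1 (by simpa using hcond) Y ?_).trans_eq' (by simp)
  rw [← hδc]
  simpa using hY
end

section
/- Let $L > 2$, let $n$ be a positive integer, let $X_1, \dots, X_n$ be independent random variables uniformly distributed on $[0, L]$, and let $U_{(1)} \le \cdots \le U_{(n)}$ be their order statistics. For $\delta > 0$ and $0 \le L_0 < L$, the probability that there exists $i < n$ with $U_{(i)} \ge L_0$ and $U_{(i+1)} - U_{(i)} < \delta e^{-U_{(i)}}$ is at most $\frac{n(n-1)}{L^2} \cdot \delta e^{-L_0}$. -/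
/-!
Union bound over ordered pairs `(j, k)` of distinct indices: a too-close consecutive pair of
order statistics above `L0` is such a pair with `L0 ≤ X j ≤ X k < X j + δ e^{-X j}`. Two
coordinates of the sample are independent, each with density at most `1/L`, so by Fubini each
pair has probability at most `L⁻² ∫_{L0}^∞ δ e^{-x} dx = L⁻² δ e^{-L0}`.
-/

open MeasureTheory ProbabilityTheory Set
open scoped ENNReal

namespace MeasureTheory.Measure

theorem map_eval_prodMk_eval_pi {ι : Type*} [Fintype ι] {α : ι → Type*}
    [∀ i, MeasurableSpace (α i)] (μ : ∀ i, Measure (α i)) [∀ i, IsProbabilityMeasure (μ i)]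
    {j k : ι} (hjk : j ≠ k) :
    (Measure.pi μ).map (fun x => (x j, x k)) = (μ j).prod (μ k) := by
  have hindep :=
    (iIndepFun_pi (μ := μ) (X := fun _ x => x) fun _ => aemeasurable_id).indepFun hjk
  rw [indepFun_iff_map_prod_eq_prod_map_map (measurable_pi_apply j).aemeasurable
    (measurable_pi_apply k).aemeasurable] at hindep
  simpa only [(measurePreserving_eval μ _).map_eq] using hindep

theorem pi_exists_ne_mem_le {ι α : Type*} [Fintype ι] [MeasurableSpace α] (μ : Measure α)
    [IsProbabilityMeasure μ] {T : Set (α × α)} (hT : MeasurableSet T) :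
    Measure.pi (fun _ : ι => μ) {x | ∃ j k, j ≠ k ∧ (x j, x k) ∈ T} ≤
      ((Fintype.card ι * Fintype.card ι - Fintype.card ι : ℕ) : ℝ≥0∞) * μ.prod μ T := by
  classical
  have hcover : {x : ι → α | ∃ j k, j ≠ k ∧ (x j, x k) ∈ T} =
      ⋃ p ∈ (Finset.univ.offDiag : Finset (ι × ι)), (fun x => (x p.1, x p.2)) ⁻¹' T := by
    ext x; simp
  have hpair : ∀ p ∈ (Finset.univ.offDiag : Finset (ι × ι)),
      Measure.pi (fun _ : ι => μ) ((fun x => (x p.1, x p.2)) ⁻¹' T) = μ.prod μ T := by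
    intro p hp
    rw [← map_apply (by fun_prop) hT, map_eval_prodMk_eval_pi _ (Finset.mem_offDiag.1 hp).2.2]
  calc _ ≤ ∑ p ∈ (Finset.univ.offDiag : Finset (ι × ι)),
        Measure.pi (fun _ : ι => μ) ((fun x => (x p.1, x p.2)) ⁻¹' T) :=
        hcover ▸ measure_biUnion_finset_le _ _
    _ = _ := by
      rw [Finset.sum_congr rfl hpair, Finset.sum_const, Finset.offDiag_card, nsmul_eq_mul,
        Finset.card_univ]

end MeasureTheory.Measure

theorem Tuple.exists_ne_of_sort_succ {α : Type*} [LinearOrder α] {n : ℕ} (x : Fin n → α)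
    {R : α → α → Prop} (i : Fin n) (h : (i : ℕ) + 1 < n)
    (hR : R (x (Tuple.sort x i)) (x (Tuple.sort x ⟨i + 1, h⟩))) :
    ∃ j k, j ≠ k ∧ x j ≤ x k ∧ R (x j) (x k) :=
  ⟨_, _, (Tuple.sort x).injective.ne (Fin.ne_of_val_ne (by simp)),
    Tuple.monotone_sort x (Fin.mk_le_mk.2 (Nat.le_succ i)), hR⟩

def closePairs (L0 δ : ℝ) : Set (ℝ × ℝ) :=
  {p | L0 ≤ p.1 ∧ p.1 ≤ p.2 ∧ p.2 - p.1 < δ * Real.exp (-p.1)}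

theorem measurableSet_closePairs (L0 δ : ℝ) : MeasurableSet (closePairs L0 δ) := by
  unfold closePairs; measurability

theorem lintegral_Ici_ofReal_exp_neg (a : ℝ) :
    ∫⁻ x in Ici a, ENNReal.ofReal (Real.exp (-x)) = ENNReal.ofReal (Real.exp (-a)) := by
  rw [setLIntegral_congr Ioi_ae_eq_Ici.symm, ← ofReal_integral_eq_lintegral_ofReal
    (integrableOn_exp_neg_Ioi a) (.of_forall fun x => (Real.exp_pos _).le), integral_exp_neg_Ioi]

theorem volume_prodMk_preimage_closePairs_le (L0 : ℝ) {δ : ℝ} (hδ : 0 ≤ δ) (x : ℝ) :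
    volume (Prod.mk x ⁻¹' closePairs L0 δ) ≤
      (Ici L0).indicator (fun x => ENNReal.ofReal δ * ENNReal.ofReal (Real.exp (-x))) x := by
  by_cases hx : L0 ≤ x
  · have hsub : Prod.mk x ⁻¹' closePairs L0 δ ⊆ Ico x (x + δ * Real.exp (-x)) :=
      fun y ⟨_, hxy, hy⟩ => ⟨hxy, by linarith⟩
    rw [indicator_of_mem (mem_Ici.2 hx), ← ENNReal.ofReal_mul hδ]
    simpa using measure_mono (μ := volume) hsub
  · have hempty : Prod.mk x ⁻¹' closePairs L0 δ = ∅ :=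
      eq_empty_of_forall_notMem fun _ hy => hx hy.1
    simp [hempty]

theorem prod_closePairs_le {μ : Measure ℝ} [SFinite μ] {c : ℝ≥0∞} (hμ : μ ≤ c • volume)
    (L0 : ℝ) {δ : ℝ} (hδ : 0 ≤ δ) :
    μ.prod μ (closePairs L0 δ) ≤ c * c * ENNReal.ofReal (δ * Real.exp (-L0)) := by
  rw [Measure.prod_apply (measurableSet_closePairs L0 δ)]
  calc ∫⁻ x, μ (Prod.mk x ⁻¹' closePairs L0 δ) ∂μ
      ≤ ∫⁻ x, c * (Ici L0).indicator
          (fun x => ENNReal.ofReal δ * ENNReal.ofReal (Real.exp (-x))) x ∂(c • volume) :=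
        lintegral_mono' hμ fun x => (hμ _).trans <|
          mul_le_mul_right (volume_prodMk_preimage_closePairs_le L0 hδ x) c
    _ = c * c * ENNReal.ofReal (δ * Real.exp (-L0)) := by
      rw [lintegral_smul_measure,
        lintegral_const_mul _ ((by fun_prop : Measurable _).indicator measurableSet_Ici),
        lintegral_indicator measurableSet_Ici, lintegral_const_mul _ (by fun_prop),
        lintegral_Ici_ofReal_exp_neg, ENNReal.ofReal_mul hδ]
      ring

theorem isProbabilityMeasure_uniform_Icc {L : ℝ} (hL : 0 < L) :
    IsProbabilityMeasure ((ENNReal.ofReal L)⁻¹ • volume.restrict (Icc 0 L)) :=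
  ⟨by simp [ENNReal.inv_mul_cancel (ENNReal.ofReal_pos.2 hL).ne' ENNReal.ofReal_ne_top]⟩

open MeasureTheory in
theorem stmt9_general (L : ℝ) (hL : 2 < L) (n : ℕ)
    (δ : ℝ) (hδ : 0 < δ) (L0 : ℝ) :
    (Measure.pi (fun _ : Fin n => (ENNReal.ofReal L)⁻¹ • volume.restrict (Set.Icc 0 L)))
        {X : Fin n → ℝ | ∃ i : Fin n, ∃ h : (i : ℕ) + 1 < n,
          L0 ≤ X (Tuple.sort X i) ∧
          X (Tuple.sort X ⟨(i : ℕ) + 1, h⟩) - X (Tuple.sort X i) <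
            δ * Real.exp (-(X (Tuple.sort X i)))} ≤
      ENNReal.ofReal ((n : ℝ) * ((n : ℝ) - 1) / L ^ 2 * δ * Real.exp (-L0)) := by
  have hLpos : 0 < L := by linarith
  have := isProbabilityMeasure_uniform_Icc hLpos
  calc _ ≤ Measure.pi (fun _ : Fin n => (ENNReal.ofReal L)⁻¹ • volume.restrict (Icc 0 L))
        {X | ∃ j k, j ≠ k ∧ (X j, X k) ∈ closePairs L0 δ} :=
        measure_mono <| by
          rintro X ⟨i, h, hR⟩
          obtain ⟨j, k, hjk, hle, hL0, hlt⟩ := Tuple.exists_ne_of_sort_succ X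
            (R := fun a b => L0 ≤ a ∧ b - a < δ * Real.exp (-a)) i h hR
          exact ⟨j, k, hjk, hL0, hle, hlt⟩
    _ ≤ ((n * n - n : ℕ) : ℝ≥0∞) *
          ((ENNReal.ofReal L)⁻¹ * (ENNReal.ofReal L)⁻¹ * ENNReal.ofReal (δ * Real.exp (-L0))) := by
      grw [Measure.pi_exists_ne_mem_le _ (measurableSet_closePairs L0 δ), Fintype.card_fin,
        prod_closePairs_le (fun s => mul_le_mul_right (Measure.restrict_le_self s) _) L0 hδ.le]
    _ = _ := by
      rw [← ENNReal.ofReal_inv_of_pos hLpos, ← ENNReal.ofReal_natCast,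
        ← ENNReal.ofReal_mul (by positivity), ← ENNReal.ofReal_mul (by positivity),
        ← ENNReal.ofReal_mul (by positivity), Nat.cast_sub (Nat.le_mul_self n)]
      congr 1
      push_cast
      ring

open MeasureTheory in
theorem stmt9 (L : ℝ) (hL : 2 < L) (n : ℕ) (hn : 0 < n)
    (δ : ℝ) (hδ : 0 < δ) (L0 : ℝ) (hL0 : 0 ≤ L0) (hL0' : L0 < L) :
    (Measure.pi (fun _ : Fin n => (ENNReal.ofReal L)⁻¹ • volume.restrict (Set.Icc 0 L)))
        {X : Fin n → ℝ | ∃ i : Fin n, ∃ h : (i : ℕ) + 1 < n,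
          L0 ≤ X (Tuple.sort X i) ∧
          X (Tuple.sort X ⟨(i : ℕ) + 1, h⟩) - X (Tuple.sort X i) <
            δ * Real.exp (-(X (Tuple.sort X i)))} ≤
      ENNReal.ofReal ((n : ℝ) * ((n : ℝ) - 1) / L ^ 2 * δ * Real.exp (-L0)) :=
  stmt9_general L hL n δ hδ L0
end
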